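/- arXiv:math/0404070 — 2 statements merged into one kernel-verified Lean document; each statement's English description precedes it below -/
import Mathlib

section
/- (Renormalization Lemma) Let h ∈ H. Then ĥγ_k(t, h) := lim_{ε→0} Σ_{l=1}^{k} C(k−1, l−1)(−h_ε)^{k−l} α_{l,ε}(t) exists for all k ≥ 1, and if h̄ ∈ H with lim_{ε→0}(h_ε − h̄_ε) = b, then for every k ≥ 1: ĥγ_k(t, h) = Σ_{m=1}^{k} C(k−1, m−1)(−b)^{k−m} ĥγ_m(t, h̄). -/
/-!
Common definitions for formalizing "An almost sure invariance principle for the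
range of planar random walks" by Bass and Rosen.
-/

open MeasureTheory ProbabilityTheory Filter Finset Real

noncomputable section

namespace PlanarRange

attribute [local instance] Classical.propDecidable

/-- squared Euclidean norm on `ℝ × ℝ`. -/
def nsq (x : ℝ × ℝ) : ℝ := x.1 ^ 2 + x.2 ^ 2

/-- Euclidean norm on `ℝ × ℝ`. -/
def enorm2 (x : ℝ × ℝ) : ℝ := Real.sqrt (nsq x)

/-- embedding of the planar lattice `ℤ²` into the plane. -/
def toR2 (x : ℤ × ℤ) : ℝ × ℝ := ((x.1 : ℝ), (x.2 : ℝ))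

/-- the planar Brownian transition density `p_t(x)`. -/
def pker (t : ℝ) (x : ℝ × ℝ) : ℝ := (2 * π * t)⁻¹ * Real.exp (-nsq x / (2 * t))

/-- `u_ε = ∫_0^∞ e^{-t} p_{t+ε}(0) dt`. -/
def uEps (e : ℝ) : ℝ := ∫ t in Set.Ioi (0 : ℝ), Real.exp (-t) * pker (t + e) 0

/-- `u¹(y) = ∫_0^∞ e^{-t} p_t(y) dt`. -/
def u1 (y : ℝ × ℝ) : ℝ := ∫ t in Set.Ioi (0 : ℝ), Real.exp (-t) * pker t y

/-- the characteristic function `φ(p) = E e^{i p·X}` of a step distribution on `ℤ²`. -/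
def charFn (μ : Measure (ℤ × ℤ)) (p : ℝ × ℝ) : ℂ :=
  ∫ x : ℤ × ℤ, Complex.exp (Complex.I * ((p.1 * x.1 + p.2 * x.2 : ℝ) : ℂ)) ∂μ

/-- strong aperiodicity in the sense of Spitzer: `φ(p) = 1` only for `p ∈ 2πℤ²`. -/
def StronglyAperiodic (μ : Measure (ℤ × ℤ)) : Prop :=
  ∀ p : ℝ × ℝ, charFn μ p = 1 → ∃ a b : ℤ, p = (2 * π * a, 2 * π * b)

/-- the constant `c_X` of the paper. -/
def cX (μ : Measure (ℤ × ℤ)) : ℝ :=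
  (2 * π)⁻¹ * Real.log (π ^ 2 / 2) +
    ((2 * π) ^ 2)⁻¹ *
      (∫ p in Set.Icc (-π) π ×ˢ Set.Icc (-π) π,
        ((charFn μ p - 1 + ((nsq p / 2 : ℝ) : ℂ)) /
          ((1 - charFn μ p) * ((nsq p / 2 : ℝ) : ℂ)))).re

/-- hypotheses on the step distribution: symmetric, strongly aperiodic, covariance matrix
the identity, `2+δ` moments. -/
structure IsAperiodicStep (μ : Measure (ℤ × ℤ)) (δ : ℝ) : Prop where
  prob : IsProbabilityMeasure μ
  symm : μ.map (fun x => -x) = μ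
  cov1 : (∫ x : ℤ × ℤ, ((x.1 : ℝ)) ^ 2 ∂μ) = 1
  cov2 : (∫ x : ℤ × ℤ, ((x.2 : ℝ)) ^ 2 ∂μ) = 1
  cov12 : (∫ x : ℤ × ℤ, (x.1 : ℝ) * (x.2 : ℝ) ∂μ) = 0
  momExp : 0 < δ
  mom : Integrable (fun x : ℤ × ℤ => ((x.1 : ℝ) ^ 2 + (x.2 : ℝ) ^ 2) ^ ((2 + δ) / 2)) μ
  aper : StronglyAperiodic μ

variable {Ω : Type*} [MeasurableSpace Ω]

/-- the random walk `S_n = X_1 + ⋯ + X_n`. -/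
def Swalk (X : ℕ → Ω → ℤ × ℤ) (n : ℕ) (ω : Ω) : ℤ × ℤ := ∑ i ∈ Finset.range n, X i ω

/-- `X` is an i.i.d. sequence with common law `μ`. -/
structure IsRandomWalk (P : Measure Ω) (μ : Measure (ℤ × ℤ)) (X : ℕ → Ω → ℤ × ℤ) : Prop where
  meas : ∀ n, Measurable (X n)
  dist : ∀ n, P.map (X n) = μ
  indep : iIndepFun X P

/-- cardinality of the range `R(n) = {S_1, …, S_n}`. -/
def rangeCard (X : ℕ → Ω → ℤ × ℤ) (n : ℕ) (ω : Ω) : ℕ :=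
  ((Finset.Icc 1 n).image fun i => Swalk X i ω).card

/-- the transition function `q_n(x)`. -/
def qfun (P : Measure Ω) (X : ℕ → Ω → ℤ × ℤ) (n : ℕ) (x : ℤ × ℤ) : ℝ :=
  (P {ω | Swalk X n ω = x}).toReal

/-- the Green function `G_λ(x) = Σ_n e^{-λn} q_n(x)`. -/
def Gl (P : Measure Ω) (X : ℕ → Ω → ℤ × ℤ) (l : ℝ) (x : ℤ × ℤ) : ℝ :=
  ∑' n : ℕ, Real.exp (-(l * n)) * qfun P X n x

/-- `g_λ = G_λ(0)`. -/
def gl (P : Measure Ω) (X : ℕ → Ω → ℤ × ℤ) (l : ℝ) : ℝ := Gl P X l 0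

/-- the geometric killing time `ζ_λ`, i.e. `ζ_λ = n` iff `(n-1)λ < ζ ≤ nλ`. -/
def zetaL (ζ : Ω → ℝ) (l : ℝ) (ω : Ω) : ℕ := ⌈ζ ω / l⌉₊

/-- `ζ` is an exponential random variable of mean 1. -/
structure IsExpZeta (P : Measure Ω) (ζ : Ω → ℝ) : Prop where
  meas : Measurable ζ
  dist : ∀ t : ℝ, 0 ≤ t → P {ω | t < ζ ω} = ENNReal.ofReal (Real.exp (-t))

/-- the random walk intersection local times with offsets,
`Ī_k(n,x) = Σ_{0 ≤ i_1 ≤ ⋯ ≤ i_k < n} ∏_{j=2}^k δ(S_{i_j} - S_{i_{j-1}} - x_j)`.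
Here the offset vector is indexed so that the paper's `x_j`, `2 ≤ j ≤ k`,
is `x (j-1)`. -/
def Ibar (X : ℕ → Ω → ℤ × ℤ) (k n : ℕ) (x : ℕ → ℤ × ℤ) (ω : Ω) : ℝ :=
  ∑ i ∈ (Fintype.piFinset fun _ : Fin k => Finset.range n).filter (fun i => Monotone i),
    ∏ j ∈ Finset.range k,
      if h : j < k ∧ j ≠ 0 then
        (if Swalk X (i ⟨j, h.1⟩) ω - Swalk X (i ⟨j - 1, by omega⟩) ω = x j then 1 else 0)
      else 1

/-- the intersection local time `I_k(n)`; in particular `I_1(n) = n`. -/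
def Iwalk (X : ℕ → Ω → ℤ × ℤ) (k n : ℕ) (ω : Ω) : ℝ := Ibar X k n (fun _ => 0) ω

/-- the renormalized random walk intersection local time
`Γ_{k,λ}(n) = Σ_{j=1}^k C(k-1,j-1) (-1)^{k-j} g_λ^{k-j} I_j(n)`. -/
def Gammaf (P : Measure Ω) (X : ℕ → Ω → ℤ × ℤ) (l : ℝ) (k n : ℕ) (ω : Ω) : ℝ :=
  ∑ j ∈ Finset.Icc 1 k,
    (Nat.choose (k - 1) (j - 1) : ℝ) * (-1 : ℝ) ^ (k - j) * gl P X l ^ (k - j) * Iwalk X j n ω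

/-- `Γ̄_{k,λ}(n,x)`, with the offsets given in lattice units, i.e. the argument `x` here is
the paper's `x/√λ ∈ ℤ²`, so that `G_λ(x_i/√λ)` is `Gl P X l (x i)` and the deleted vectors
are re-indexed in increasing order. -/
def Gammabar (P : Measure Ω) (X : ℕ → Ω → ℤ × ℤ) (l : ℝ) (k n : ℕ) (x : ℕ → ℤ × ℤ)
    (ω : Ω) : ℝ :=
  ∑ A ∈ (Finset.range k).powerset.filter (fun A => 0 ∉ A),
    (-1 : ℝ) ^ A.card * (∏ i ∈ A, Gl P X l (x i)) *
      Ibar X (k - A.card) n (fun j => x (((Finset.range k \ A).sort (· ≤ ·)).getD j 0)) ω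

/-- `W` is a planar Brownian motion: continuous paths started at `0`, independent
increments, and each coordinate increment on `[s,t]` is a centered Gaussian of
variance `t - s`, the two coordinates being independent. -/
def IsPlanarBM (P : Measure Ω) (W : ℝ → Ω → ℝ × ℝ) : Prop :=
  (∀ t, Measurable (W t)) ∧ (∀ ω, W 0 ω = 0) ∧ (∀ ω, Continuous fun t => W t ω) ∧
  (∀ (n : ℕ) (t : Fin (n + 1) → ℝ), Monotone t →
    iIndepFun
      (fun q : Fin n × Fin 2 => fun ω =>
        if q.2 = 0 then (W (t q.1.succ) ω).1 - (W (t q.1.castSucc) ω).1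
        else (W (t q.1.succ) ω).2 - (W (t q.1.castSucc) ω).2) P) ∧
  (∀ s t : ℝ, s ≤ t →
    P.map (fun ω => (W t ω).1 - (W s ω).1) = gaussianReal 0 (t - s).toNNReal ∧
    P.map (fun ω => (W t ω).2 - (W s ω).2) = gaussianReal 0 (t - s).toNNReal)

/-- the simplex `{0 ≤ s_1 ≤ ⋯ ≤ s_k < t}`. -/
def simplexSet (k : ℕ) (t : ℝ) : Set (Fin k → ℝ) :=
  {s | Monotone s ∧ ∀ i, 0 ≤ s i ∧ s i < t}

/-- `α_{k,ε}(t)` computed for the rescaled Brownian motion `W^{(r)}_t = W_{rt}/√r`. -/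
def alphaR (W : ℝ → Ω → ℝ × ℝ) (r : ℝ) (k : ℕ) (e t : ℝ) (ω : Ω) : ℝ :=
  ∫ s in simplexSet k t,
    ∏ j ∈ Finset.range k,
      if h : j < k ∧ j ≠ 0 then
        pker e ((Real.sqrt r)⁻¹ •
          (W (r * s ⟨j, h.1⟩) ω - W (r * s ⟨j - 1, by omega⟩) ω))
      else 1

/-- the approximation `Σ_{l=1}^k C(k-1,l-1) (-h_ε)^{k-l} α_{l,ε}(t)` to the `k`-th
renormalized intersection local time of `W^{(r)}`, renormalized by the function `h`. -/
def gammaApprox (W : ℝ → Ω → ℝ × ℝ) (h : ℝ → ℝ) (r : ℝ) (k : ℕ) (e t : ℝ) (ω : Ω) : ℝ :=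
  ∑ l ∈ Finset.Icc 1 k,
    (Nat.choose (k - 1) (l - 1) : ℝ) * (-h e) ^ (k - l) * alphaR W r l e t ω

/-- `γ k r t` is the `k`-th renormalized self-intersection local time at time `t` of the
rescaled Brownian motion `W^{(r)}`. -/
def IsGammaSILT (P : Measure Ω) (W : ℝ → Ω → ℝ × ℝ) (γ : ℕ → ℝ → ℝ → Ω → ℝ) : Prop :=
  ∀ k : ℕ, 1 ≤ k → ∀ r : ℝ, 0 < r → ∀ t : ℝ, 0 ≤ t →
    ∀ᵐ ω ∂P,
      Tendsto (fun e => gammaApprox W uEps r k e t ω) (nhdsWithin 0 (Set.Ioi 0))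
        (nhds (γ k r t ω))

/-- `ᾱ_{k,ε}(t,x)`; the paper's offset `x_j`, `2 ≤ j ≤ k`, is `x (j-1)`. -/
def alphabarEps (W : ℝ → Ω → ℝ × ℝ) (k : ℕ) (x : ℕ → ℝ × ℝ) (e t : ℝ) (ω : Ω) : ℝ :=
  ∫ s in simplexSet k t,
    ∏ j ∈ Finset.range k,
      if h : j < k ∧ j ≠ 0 then
        pker e (W (s ⟨j, h.1⟩) ω - W (s ⟨j - 1, by omega⟩) ω - x j)
      else 1

/-- `γ̄_k(·,x)` built from a family `abar` representing the intersection local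
times `ᾱ_k(·,x)`. -/
def gammabarBM (abar : ℕ → (ℕ → ℝ × ℝ) → Ω → ℝ) (k : ℕ) (x : ℕ → ℝ × ℝ) (ω : Ω) : ℝ :=
  ∑ A ∈ (Finset.range k).powerset.filter (fun A => 0 ∉ A),
    (-1 : ℝ) ^ A.card * (∏ i ∈ A, u1 (x i)) *
      abar (k - A.card) (fun j => x (((Finset.range k \ A).sort (· ≤ ·)).getD j 0)) ω

/-- the mollifier rescaling `f_τ(x) = τ^{-2} f(x/τ)`. -/
def ftau (f : ℝ × ℝ → ℝ) (τ : ℝ) (x : ℝ × ℝ) : ℝ := (τ ^ 2)⁻¹ * f (τ⁻¹ • x)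

/-- `Ĩ_k(·, g)` with a test function `g`:
`∫_{0 ≤ t_1 ≤ ⋯ ≤ t_k < t} ∏_{i=2}^k g(√λ(S_{[t_i/λ]} - S_{[t_{i-1}/λ]})) dt`. -/
def Itilde (X : ℕ → Ω → ℤ × ℤ) (l : ℝ) (k : ℕ) (g : ℝ × ℝ → ℝ) (t : ℝ) (ω : Ω) : ℝ :=
  ∫ s in simplexSet k t,
    ∏ j ∈ Finset.range k,
      if h : j < k ∧ j ≠ 0 then
        g (Real.sqrt l •
          toR2 (Swalk X ⌊s ⟨j, h.1⟩ / l⌋₊ ω - Swalk X ⌊s ⟨j - 1, by omega⟩ / l⌋₊ ω))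
      else 1

/-- `α̃_k(·, g)` for the rescaled Brownian motion `W^{(r)}`. -/
def alphaTilde (W : ℝ → Ω → ℝ × ℝ) (r : ℝ) (k : ℕ) (g : ℝ × ℝ → ℝ) (t : ℝ) (ω : Ω) : ℝ :=
  ∫ s in simplexSet k t,
    ∏ j ∈ Finset.range k,
      if h : j < k ∧ j ≠ 0 then
        g ((Real.sqrt r)⁻¹ • (W (r * s ⟨j, h.1⟩) ω - W (r * s ⟨j - 1, by omega⟩) ω))
      else 1

/-- `ℝ²`-valued partial sums. -/
def SwalkR (X : ℕ → Ω → ℝ × ℝ) (n : ℕ) (ω : Ω) : ℝ × ℝ := ∑ i ∈ Finset.range n, X i ω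

/-- hypotheses on an `ℝ²`-valued step distribution: mean zero, covariance matrix the
identity, finite `p`-th moment. -/
structure IsStepR2 (ν : Measure (ℝ × ℝ)) (p : ℝ) : Prop where
  prob : IsProbabilityMeasure ν
  mean1 : (∫ x : ℝ × ℝ, x.1 ∂ν) = 0
  mean2 : (∫ x : ℝ × ℝ, x.2 ∂ν) = 0
  cov1 : (∫ x : ℝ × ℝ, x.1 ^ 2 ∂ν) = 1
  cov2 : (∫ x : ℝ × ℝ, x.2 ^ 2 ∂ν) = 1
  cov12 : (∫ x : ℝ × ℝ, x.1 * x.2 ∂ν) = 0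
  mom : Integrable (fun x : ℝ × ℝ => nsq x ^ (p / 2)) ν

/-- the standard planar Gaussian distribution. -/
def stdGaussian2 : Measure (ℝ × ℝ) := (gaussianReal 0 1).prod (gaussianReal 0 1)

/-- the `L²` strong approximation coupling of Section 3:
`‖(S([mt]) - W(mt))/√m‖₂ = O(m^{1/p - 1/2} (t^{1/p} + 1))`. -/
def CoupledL2 (P : Measure Ω) (X : ℕ → Ω → ℤ × ℤ) (W : ℝ → Ω → ℝ × ℝ) (p : ℝ) : Prop :=
  ∃ C : ℝ, ∀ m : ℕ, 1 ≤ m → ∀ t : ℝ, 0 < t →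
    (∫ ω, nsq ((Real.sqrt m)⁻¹ • (toR2 (Swalk X ⌊(m : ℝ) * t⌋₊ ω) - W ((m : ℝ) * t) ω)) ∂P)
      ≤ (C * (m : ℝ) ^ (1 / p - 1 / 2) * (t ^ (1 / p) + 1)) ^ 2

/-- the `ℓ^m` norm of a function on the lattice `ℤ²`. -/
def lpNorm (m : ℕ) (F : ℤ × ℤ → ℝ) : ℝ := (∑' x : ℤ × ℤ, |F x| ^ m) ^ (1 / (m : ℝ))

/-- the difference operator `Δ_w F(x) = F(x+w) - F(x)`. -/
def diffOp (w : ℤ × ℤ) (F : ℤ × ℤ → ℝ) : ℤ × ℤ → ℝ := fun x => F (x + w) - F x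

/-- `z/√λ` rounded to the lattice, for `z ∈ ℤ²`. -/
def scaleLat (l : ℝ) (z : ℤ × ℤ) : ℤ × ℤ :=
  (⌊(z.1 : ℝ) / Real.sqrt l⌋, ⌊(z.2 : ℝ) / Real.sqrt l⌋)

/-- `x/√λ` rounded to the lattice, for `x ∈ ℝ²`. -/
def roundLat (l : ℝ) (x : ℝ × ℝ) : ℤ × ℤ := (⌊x.1 / Real.sqrt l⌋, ⌊x.2 / Real.sqrt l⌋)


lemma sum_Icc_one' {M : Type*} [AddCommMonoid M] (k : ℕ) (f : ℕ → M) :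
    ∑ m ∈ Finset.Icc 1 k, f m = ∑ i ∈ Finset.range k, f (i + 1) := by
  rw [← Finset.Ico_add_one_right_eq_Icc, Finset.sum_Ico_eq_sum_range]
  simp [add_comm]

lemma choose_sub_sum' (n i : ℕ) (hi : i ≤ n) (a b : ℝ) :
    ∑ j ∈ Finset.range (n + 1), (n.choose j : ℝ) * (j.choose i : ℝ) * a ^ (n - j) * b ^ (j - i)
      = (n.choose i : ℝ) * (a + b) ^ (n - i) := by
  have h1 : ∑ j ∈ Finset.range (n + 1),
      (n.choose j : ℝ) * (j.choose i : ℝ) * a ^ (n - j) * b ^ (j - i)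
      = ∑ j ∈ Finset.Ico i (n + 1),
        (n.choose j : ℝ) * (j.choose i : ℝ) * a ^ (n - j) * b ^ (j - i) := by
    rw [Finset.range_eq_Ico]
    refine (Finset.sum_subset (Finset.Ico_subset_Ico (Nat.zero_le _) le_rfl) ?_).symm
    intro j hj hj2
    have hji : j < i := by
      simp only [Finset.mem_Ico] at hj hj2
      omega
    rw [Nat.choose_eq_zero_of_lt hji]
    push_cast; ring
  rw [h1, Finset.sum_Ico_eq_sum_range]
  have h2 : ∀ s ∈ Finset.range (n + 1 - i),
      (n.choose (i + s) : ℝ) * ((i + s).choose i : ℝ) * a ^ (n - (i + s)) * b ^ (i + s - i)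
      = (n.choose i : ℝ) * (((n - i).choose s : ℝ) * b ^ s * a ^ (n - i - s)) := by
    intro s hs
    simp only [Finset.mem_range] at hs
    have hsn : i + s ≤ n := by omega
    have key : n.choose (i + s) * (i + s).choose i = n.choose i * (n - i).choose s := by
      have := Nat.choose_mul (n := n) (Nat.le_add_right i s)
      simpa using this
    have keyR : ((n.choose (i + s)) : ℝ) * ((i + s).choose i : ℝ)
        = (n.choose i : ℝ) * ((n - i).choose s : ℝ) := by exact_mod_cast congrArg Nat.cast key
    have e1 : i + s - i = s := by omega
    have e2 : n - (i + s) = n - i - s := by omega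
    rw [e1, e2]
    linear_combination (a ^ (n - i - s) * b ^ s) * keyR
  rw [Finset.sum_congr rfl h2, ← Finset.mul_sum]
  congr 1
  have hp := add_pow b a (n - i)
  have e3 : n + 1 - i = (n - i) + 1 := by omega
  rw [e3, add_comm a b, hp]
  exact Finset.sum_congr rfl fun s hs => by ring

lemma binom_transform' (n : ℕ) (a b : ℝ) (β : ℕ → ℝ) :
    ∑ j ∈ Finset.range (n + 1), (n.choose j : ℝ) * a ^ (n - j) *
        ∑ i ∈ Finset.range (j + 1), (j.choose i : ℝ) * b ^ (j - i) * β i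
      = ∑ i ∈ Finset.range (n + 1), (n.choose i : ℝ) * (a + b) ^ (n - i) * β i := by
  have hext : ∀ j ∈ Finset.range (n + 1),
      (n.choose j : ℝ) * a ^ (n - j) *
          ∑ i ∈ Finset.range (j + 1), (j.choose i : ℝ) * b ^ (j - i) * β i
      = ∑ i ∈ Finset.range (n + 1),
          (n.choose j : ℝ) * (j.choose i : ℝ) * a ^ (n - j) * b ^ (j - i) * β i := by
    intro j hj
    simp only [Finset.mem_range] at hj
    rw [Finset.mul_sum]
    have hsub : Finset.range (j + 1) ⊆ Finset.range (n + 1) := by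
      intro x hx; simp only [Finset.mem_range] at *; omega
    refine ((Finset.sum_subset hsub ?_).symm).trans ?_ |>.symm
    · intro i hi hi2
      simp only [Finset.mem_range] at hi hi2
      have hji : j < i := by omega
      rw [Nat.choose_eq_zero_of_lt hji]
      push_cast; ring
    · exact Finset.sum_congr rfl fun i _ => by ring
  rw [Finset.sum_congr rfl hext, Finset.sum_comm]
  refine Finset.sum_congr rfl fun i hi => ?_
  simp only [Finset.mem_range] at hi
  have hcs := choose_sub_sum' n i (by omega) a b
  calc ∑ j ∈ Finset.range (n + 1),
        (n.choose j : ℝ) * (j.choose i : ℝ) * a ^ (n - j) * b ^ (j - i) * β i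
      = (∑ j ∈ Finset.range (n + 1),
          (n.choose j : ℝ) * (j.choose i : ℝ) * a ^ (n - j) * b ^ (j - i)) * β i := by
        rw [Finset.sum_mul]
    _ = (n.choose i : ℝ) * (a + b) ^ (n - i) * β i := by rw [hcs]

lemma gammaApprox_transform' {Ω : Type*} [MeasurableSpace Ω] (W : ℝ → Ω → ℝ × ℝ)
    (g1 g2 : ℝ → ℝ) (r : ℝ) (k : ℕ) (hk : 1 ≤ k) (e t : ℝ) (ω : Ω) :
    gammaApprox W g1 r k e t ω
      = ∑ m ∈ Finset.Icc 1 k, (Nat.choose (k - 1) (m - 1) : ℝ) *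
          (-(g1 e - g2 e)) ^ (k - m) * gammaApprox W g2 r m e t ω := by
  obtain ⟨n, rfl⟩ : ∃ n, k = n + 1 := ⟨k - 1, by omega⟩
  unfold gammaApprox
  rw [sum_Icc_one', sum_Icc_one']
  simp only [Nat.add_sub_cancel, Nat.add_sub_add_right]
  have hinner : ∀ j : ℕ, ∑ m ∈ Finset.Icc 1 (j + 1),
      (Nat.choose j (m - 1) : ℝ) * (-g2 e) ^ (j + 1 - m) * alphaR W r m e t ω
      = ∑ i ∈ Finset.range (j + 1), (j.choose i : ℝ) * (-g2 e) ^ (j - i) *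
          alphaR W r (i + 1) e t ω := by
    intro j
    rw [sum_Icc_one']
    simp only [Nat.add_sub_cancel, Nat.add_sub_add_right]
  have key := binom_transform' n (-(g1 e - g2 e)) (-g2 e)
      (fun i => alphaR W r (i + 1) e t ω)
  have hab : (-(g1 e - g2 e)) + (-g2 e) = -g1 e := by ring
  rw [hab] at key
  rw [← key]
  refine Finset.sum_congr rfl fun j hj => ?_
  rw [hinner j]

/-- **Lemma 6.1** (Renormalization Lemma). Let `h ∈ H`. Then `ĥγ_k(t,h)` exists for all
`k ≥ 1`, and if `h̄ ∈ H` with `lim_{ε→0}(h_ε - h̄_ε) = b` then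
`ĥγ_k(t,h) = Σ_{m=1}^k C(k-1,m-1) (-b)^{k-m} ĥγ_m(t,h̄)`. -/
theorem renormalization_lemma {Ω : Type*} [MeasurableSpace Ω] (P : Measure Ω)
    [IsProbabilityMeasure P] (W : ℝ → Ω → ℝ × ℝ) (hW : IsPlanarBM P W)
    (h hbar : ℝ → ℝ) (b : ℝ)
    (hH : ∃ L : ℝ, Tendsto (fun e => h e - uEps e) (nhdsWithin 0 (Set.Ioi 0)) (nhds L))
    (hHbar : ∃ L : ℝ, Tendsto (fun e => hbar e - uEps e) (nhdsWithin 0 (Set.Ioi 0)) (nhds L))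
    (hb : Tendsto (fun e => h e - hbar e) (nhdsWithin 0 (Set.Ioi 0)) (nhds b))
    (t : ℝ) (ht : 0 ≤ t)
    (hexists : ∀ k : ℕ, 1 ≤ k → ∀ᵐ ω ∂P, ∃ L : ℝ,
      Tendsto (fun e => gammaApprox W uEps 1 k e t ω) (nhdsWithin 0 (Set.Ioi 0)) (nhds L))
    (k : ℕ) (hk : 1 ≤ k) :
    ∀ᵐ ω ∂P,
      (∃ L : ℝ,
          Tendsto (fun e => gammaApprox W h 1 k e t ω) (nhdsWithin 0 (Set.Ioi 0)) (nhds L)) ∧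
      ∀ (L : ℝ) (M : ℕ → ℝ),
        Tendsto (fun e => gammaApprox W h 1 k e t ω) (nhdsWithin 0 (Set.Ioi 0)) (nhds L) →
        (∀ m : ℕ, 1 ≤ m → m ≤ k →
          Tendsto (fun e => gammaApprox W hbar 1 m e t ω) (nhdsWithin 0 (Set.Ioi 0))
            (nhds (M m))) →
        L = ∑ m ∈ Finset.Icc 1 k,
          (Nat.choose (k - 1) (m - 1) : ℝ) * (-b) ^ (k - m) * M m := by
  have hae : ∀ᵐ ω ∂P, ∀ m : ℕ, 1 ≤ m → ∃ N : ℝ,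
      Tendsto (fun e => gammaApprox W uEps 1 m e t ω) (nhdsWithin 0 (Set.Ioi 0)) (nhds N) := by
    rw [MeasureTheory.ae_all_iff]
    intro m
    by_cases hm : 1 ≤ m
    · exact (hexists m hm).mono fun ω hω _ => hω
    · exact MeasureTheory.ae_of_all _ fun ω hm' => absurd hm' hm
  obtain ⟨c, hc⟩ := hH
  filter_upwards [hae] with ω hω
  have hNlim : ∀ m : ℕ, 1 ≤ m → ∃ N : ℝ,
      Tendsto (fun e => gammaApprox W uEps 1 m e t ω) (nhdsWithin 0 (Set.Ioi 0)) (nhds N) := hω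
  constructor
  · -- existence of the limit defining `ĥγ_k(t,h)`
    choose! N hN using hNlim
    refine ⟨∑ m ∈ Finset.Icc 1 k,
      (Nat.choose (k - 1) (m - 1) : ℝ) * (-c) ^ (k - m) * N m, ?_⟩
    have heq : ∀ e, gammaApprox W h 1 k e t ω
        = ∑ m ∈ Finset.Icc 1 k, (Nat.choose (k - 1) (m - 1) : ℝ) *
            (-(h e - uEps e)) ^ (k - m) * gammaApprox W uEps 1 m e t ω :=
      fun e => gammaApprox_transform' W h uEps 1 k hk e t ω
    refine Tendsto.congr (fun e => (heq e).symm) ?_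
    refine tendsto_finset_sum _ fun m hm => ?_
    obtain ⟨hm1, hm2⟩ := Finset.mem_Icc.mp hm
    exact ((hc.neg.pow (k - m)).const_mul _).mul (hN m hm1)
  · -- the change-of-renormalizer identity
    intro L M hL hM
    have heq : ∀ e, gammaApprox W h 1 k e t ω
        = ∑ m ∈ Finset.Icc 1 k, (Nat.choose (k - 1) (m - 1) : ℝ) *
            (-(h e - hbar e)) ^ (k - m) * gammaApprox W hbar 1 m e t ω :=
      fun e => gammaApprox_transform' W h hbar 1 k hk e t ω
    have hL2 : Tendsto (fun e => gammaApprox W h 1 k e t ω) (nhdsWithin 0 (Set.Ioi 0))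
        (nhds (∑ m ∈ Finset.Icc 1 k,
          (Nat.choose (k - 1) (m - 1) : ℝ) * (-b) ^ (k - m) * M m)) := by
      refine Tendsto.congr (fun e => (heq e).symm) ?_
      refine tendsto_finset_sum _ fun m hm => ?_
      obtain ⟨hm1, hm2⟩ := Finset.mem_Icc.mp hm
      exact ((hb.neg.pow (k - m)).const_mul _).mul (hM m hm1 hm2)
    exact tendsto_nhds_unique hL hL2


end PlanarRange
end
end

section
/- (Rescaling Lemma) Let h ∈ H and let ω_r(s) = r^{−1/2} ω(rs) denote the Brownian path rescaled by r > 0. Then for every k ≥ 1: ĥγ_k(t, h, ω_r) = r^{−1} Σ_{m=1}^{k} C(k−1, m−1) ((1/2π) log(1/r))^{k−m} ĥγ_m(rt, h, ω). -/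
/-!
Common definitions for formalizing "An almost sure invariance principle for the
range of planar random walks" by Bass and Rosen.
-/

open MeasureTheory ProbabilityTheory Filter Finset Real

noncomputable section

namespace PlanarRange

attribute [local instance] Classical.propDecidable

variable {Ω : Type*} [MeasurableSpace Ω]

section RescalingAux

open Pointwise intervalIntegral

lemma expNegMulInt {b : ℝ} (hb : 0 < b) :
    IntegrableOn (fun x : ℝ => Real.exp (-(b * x))) (Set.Ioi (0:ℝ)) := by
  simpa [neg_mul] using exp_neg_integrableOn_Ioi 0 hb

lemma expA {u : ℝ} (hu : 0 < u) (a b : ℝ) :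
    ∫ s in a..b, Real.exp (-(s*u)) = (Real.exp (-(a*u)) - Real.exp (-(b*u)))/u := by
  have h : ∀ s : ℝ, HasDerivAt (fun s => -(Real.exp (-(s*u)) / u)) (Real.exp (-(s*u))) s := by
    intro s
    have h1 : HasDerivAt (fun s : ℝ => -(s*u)) (-u) s := by
      simpa using ((hasDerivAt_id s).mul_const u).fun_neg
    have h2 := (Real.hasDerivAt_exp (-(s*u))).comp s h1
    have h3 := (h2.div_const u).fun_neg
    refine h3.congr_deriv ?_
    field_simp
  rw [intervalIntegral.integral_eq_sub_of_hasDerivAt (fun s _ => h s)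
    ((Real.continuous_exp.comp (by continuity)).intervalIntegrable a b)]
  ring

lemma frullani_le_one {r : ℝ} (hr0 : 0 < r) (hr1 : r ≤ 1) :
    ∫ u in Set.Ioi (0:ℝ), (Real.exp (-(r*u)) - Real.exp (-u)) / u = - Real.log r := by
  have key : ∀ u ∈ Set.Ioi (0:ℝ),
      (Real.exp (-(r*u)) - Real.exp (-u)) / u = ∫ s in Set.Ioc r 1, Real.exp (-(s*u)) := by
    intro u hu
    rw [← intervalIntegral.integral_of_le hr1, expA hu, one_mul]
  have hmeas : AEStronglyMeasurable (fun p : ℝ × ℝ => Real.exp (-(p.2 * p.1)))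
      ((volume.restrict (Set.Ioi (0:ℝ))).prod (volume.restrict (Set.Ioc r 1))) :=
    (Real.continuous_exp.comp (by continuity)).aestronglyMeasurable
  have hint : Integrable (fun p : ℝ × ℝ => Real.exp (-(p.2 * p.1)))
      ((volume.restrict (Set.Ioi (0:ℝ))).prod (volume.restrict (Set.Ioc r 1))) := by
    rw [MeasureTheory.integrable_prod_iff hmeas]
    constructor
    · refine Filter.Eventually.of_forall fun u => ?_
      exact (Real.continuous_exp.comp (by continuity)).integrableOn_Ioc
    · have hb : Integrable (fun u : ℝ => (1 - r) * Real.exp (-(r * u)))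
          (volume.restrict (Set.Ioi (0:ℝ))) := by
        simpa [mul_comm] using (exp_neg_integrableOn_Ioi 0 hr0).const_mul (1 - r)
      refine Integrable.mono' hb ?_ ?_
      · exact hmeas.norm.integral_prod_right'
      · filter_upwards [ae_restrict_mem measurableSet_Ioi] with u hu
        have h1 : ∀ s ∈ Set.Ioc r 1, ‖Real.exp (-(s * u))‖ ≤ Real.exp (-(r*u)) := by
          intro s hs
          rw [Real.norm_eq_abs, abs_of_pos (Real.exp_pos _)]
          exact Real.exp_le_exp.2 (by nlinarith [hs.1, le_of_lt (Set.mem_Ioi.mp hu)])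
        have h2 : ‖∫ s in Set.Ioc r 1, ‖Real.exp (-(s * u))‖‖
            ≤ Real.exp (-(r*u)) * (volume (Set.Ioc r 1)).toReal := by
          refine norm_setIntegral_le_of_norm_le_const ?_ (fun s hs => by
            simpa using h1 s hs)
          · exact measure_Ioc_lt_top
        calc ‖∫ s in Set.Ioc r 1, ‖Real.exp (-(s * u))‖‖
            ≤ Real.exp (-(r*u)) * (volume (Set.Ioc r 1)).toReal := h2
          _ ≤ (1 - r) * Real.exp (-(r * u)) := by
              rw [Real.volume_Ioc, ENNReal.toReal_ofReal (by linarith)]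
              nlinarith [Real.exp_pos (-(r*u))]
  have swap := MeasureTheory.integral_integral_swap
    (f := fun u s => Real.exp (-(s * u))) hint
  calc ∫ u in Set.Ioi (0:ℝ), (Real.exp (-(r*u)) - Real.exp (-u)) / u
      = ∫ u in Set.Ioi (0:ℝ), ∫ s in Set.Ioc r 1, Real.exp (-(s*u)) :=
        setIntegral_congr_fun measurableSet_Ioi key
    _ = ∫ s in Set.Ioc r 1, ∫ u in Set.Ioi (0:ℝ), Real.exp (-(s*u)) := swap
    _ = ∫ s in Set.Ioc r 1, s⁻¹ := by
        refine setIntegral_congr_fun measurableSet_Ioc fun s hs => ?_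
        have hs0 : 0 < s := lt_of_lt_of_le hr0 hs.1.le
        rw [MeasureTheory.integral_comp_mul_left_Ioi (fun x => Real.exp (-x)) 0 hs0]
        simp [integral_exp_neg_Ioi, smul_eq_mul, integral_exp_Iic_zero]
    _ = - Real.log r := by
        rw [← intervalIntegral.integral_of_le hr1, integral_inv_of_pos hr0 one_pos]
        rw [Real.log_div one_ne_zero hr0.ne', Real.log_one]
        ring

lemma frullani {r : ℝ} (hr0 : 0 < r) :
    ∫ u in Set.Ioi (0:ℝ), (Real.exp (-(r*u)) - Real.exp (-u)) / u = - Real.log r := by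
  rcases le_or_gt r 1 with hr1 | hr1
  · exact frullani_le_one hr0 hr1
  · have hinv : (0:ℝ) < r⁻¹ := by positivity
    have h1 := frullani_le_one hinv (by rw [inv_le_one_iff₀]; right; exact hr1.le)
    have h2 := MeasureTheory.integral_comp_mul_left_Ioi
      (fun u => (Real.exp (-(r⁻¹*u)) - Real.exp (-u)) / u) 0 hr0
    rw [mul_zero, h1] at h2
    have h3 : ∀ v ∈ Set.Ioi (0:ℝ), (Real.exp (-(r⁻¹*(r*v))) - Real.exp (-(r*v))) / (r*v)
        = (-r⁻¹) * ((Real.exp (-(r*v)) - Real.exp (-v)) / v) := by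
      intro v hv
      rw [inv_mul_cancel_left₀ hr0.ne']
      field_simp
      ring
    rw [setIntegral_congr_fun measurableSet_Ioi h3, MeasureTheory.integral_const_mul] at h2
    rw [smul_eq_mul, Real.log_inv, neg_neg] at h2
    have h4 := congrArg (fun x => r * x) h2
    simp only [← mul_assoc, mul_neg, mul_inv_cancel₀ hr0.ne', neg_mul, one_mul] at h4
    linarith

lemma uEps_eq (e : ℝ) :
    uEps e = (2*π)⁻¹ * ∫ u in Set.Ioi (0:ℝ), Real.exp (-u) * (u + e)⁻¹ := by
  rw [uEps, ← MeasureTheory.integral_const_mul]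
  refine setIntegral_congr_fun measurableSet_Ioi fun u _ => ?_
  have : nsq (0 : ℝ × ℝ) = 0 := by simp [nsq]
  rw [pker, this]
  simp [mul_inv]
  ring

lemma exp_inv_integrable {c e : ℝ} (hc : 0 < c) (he : 0 < e) :
    IntegrableOn (fun u : ℝ => Real.exp (-(c*u)) * (u + e)⁻¹) (Set.Ioi (0:ℝ)) := by
  refine Integrable.mono' ((expNegMulInt hc).mul_const e⁻¹) ?_ ?_
  · exact (((measurable_const.mul measurable_id').neg.exp).mul
      ((measurable_id'.add_const e).inv)).aestronglyMeasurable
  · filter_upwards [ae_restrict_mem measurableSet_Ioi] with u hu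
    have h1 : (0:ℝ) < u + e := by simp at hu; linarith
    rw [Real.norm_eq_abs, abs_mul, abs_of_pos (Real.exp_pos _), abs_of_pos (inv_pos.2 h1)]
    have : (u + e)⁻¹ ≤ e⁻¹ := by
      apply inv_anti₀ he; simp at hu; linarith
    nlinarith [Real.exp_pos (-(c*u))]

lemma uEps_diff {r : ℝ} (hr : 0 < r) :
    Tendsto (fun e => uEps (r*e) - uEps e) (nhdsWithin 0 (Set.Ioi 0))
      (nhds ((2*π)⁻¹ * Real.log (1/r))) := by
  have m : ℝ := min r 1
  have hkey : ∀ e : ℝ, 0 < e → uEps (r*e) - uEps e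
      = (2*π)⁻¹ * ∫ u in Set.Ioi (0:ℝ),
          (Real.exp (-(r*u)) - Real.exp (-u)) * (u + e)⁻¹ := by
    intro e he
    have cv : (∫ u in Set.Ioi (0:ℝ), Real.exp (-u) * (u + r*e)⁻¹)
        = ∫ u in Set.Ioi (0:ℝ), Real.exp (-(r*u)) * (u + e)⁻¹ := by
      have h2 := MeasureTheory.integral_comp_mul_left_Ioi
        (fun t => Real.exp (-t) * (t + r*e)⁻¹) 0 hr
      rw [mul_zero] at h2
      have h3 : ∀ u ∈ Set.Ioi (0:ℝ), Real.exp (-(r*u)) * (r*u + r*e)⁻¹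
          = r⁻¹ * (Real.exp (-(r*u)) * (u + e)⁻¹) := by
        intro u hu
        rw [← mul_add, mul_inv, ← mul_assoc]
        ring
      rw [setIntegral_congr_fun measurableSet_Ioi h3, MeasureTheory.integral_const_mul] at h2
      have h4 := congrArg (fun x => r * x) h2
      simp only [← mul_assoc, smul_eq_mul, mul_inv_cancel₀ hr.ne', one_mul] at h4
      linarith
    rw [uEps_eq, uEps_eq, cv, ← mul_sub, ← MeasureTheory.integral_sub
      (exp_inv_integrable hr he) (by have := exp_inv_integrable one_pos he; simp only [one_mul] at this; exact this)]
    congr 1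
    refine setIntegral_congr_fun measurableSet_Ioi fun u _ => ?_
    ring
  have hdiffbound : ∀ u : ℝ, 0 < u →
      |Real.exp (-(r*u)) - Real.exp (-u)| ≤ |1 - r| * (u * Real.exp (-(min r 1 * u))) := by
    intro u hu
    have hA := expA hu r 1
    have hb : ‖∫ s in r..(1:ℝ), Real.exp (-(s*u))‖
        ≤ Real.exp (-(min r 1 * u)) * |1 - r| := by
      refine intervalIntegral.norm_integral_le_of_norm_le_const fun x hx => ?_
      rw [Real.norm_eq_abs, abs_of_pos (Real.exp_pos _)]
      refine Real.exp_le_exp.2 ?_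
      have hx1 : min r 1 < x := (Set.uIoc_subset_uIoc_of_uIcc_subset_uIcc (by simp)) hx |>.1
      nlinarith
    rw [hA, one_mul] at hb
    rw [Real.norm_eq_abs, abs_div, abs_of_pos hu, div_le_iff₀ hu] at hb
    calc |Real.exp (-(r*u)) - Real.exp (-u)| ≤ Real.exp (-(min r 1 * u)) * |1 - r| * u := hb
      _ = |1 - r| * (u * Real.exp (-(min r 1 * u))) := by ring
  have hlim : Tendsto (fun e => ∫ u in Set.Ioi (0:ℝ),
      (Real.exp (-(r*u)) - Real.exp (-u)) * (u + e)⁻¹) (nhdsWithin 0 (Set.Ioi 0))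
      (nhds (∫ u in Set.Ioi (0:ℝ), (Real.exp (-(r*u)) - Real.exp (-u)) / u)) := by
    refine MeasureTheory.tendsto_integral_filter_of_dominated_convergence
      (fun u => |1 - r| * Real.exp (-(min r 1 * u))) ?_ ?_ ?_ ?_
    · refine Filter.Eventually.of_forall fun e => ?_
      exact ((((measurable_const.mul measurable_id').neg.exp).sub
        (measurable_id'.neg.exp)).mul
        ((measurable_id'.add_const e).inv)).aestronglyMeasurable
    · filter_upwards [self_mem_nhdsWithin] with e he
      filter_upwards [ae_restrict_mem measurableSet_Ioi] with u hu
      simp only [Set.mem_Ioi] at hu he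
      have h1 : (0:ℝ) < u + e := by linarith
      rw [Real.norm_eq_abs, abs_mul, abs_of_pos (inv_pos.2 h1)]
      have h2 : (u + e)⁻¹ ≤ u⁻¹ := inv_anti₀ hu (by linarith)
      calc |Real.exp (-(r*u)) - Real.exp (-u)| * (u + e)⁻¹
          ≤ |1 - r| * (u * Real.exp (-(min r 1 * u))) * u⁻¹ := by
            refine mul_le_mul (hdiffbound u hu) h2 (by positivity) (by positivity)
        _ = |1 - r| * Real.exp (-(min r 1 * u)) * (u * u⁻¹) := by ring
        _ = |1 - r| * Real.exp (-(min r 1 * u)) := by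
            rw [mul_inv_cancel₀ hu.ne', mul_one]
    · exact (expNegMulInt (by positivity : (0:ℝ) < min r 1)).const_mul _
    · filter_upwards [ae_restrict_mem measurableSet_Ioi] with u hu
      simp only [Set.mem_Ioi] at hu
      have h0 : Tendsto (fun e : ℝ => u + e) (nhds (0:ℝ)) (nhds (u + 0)) :=
        (continuous_const.add continuous_id).tendsto 0
      rw [add_zero] at h0
      have h1 : Tendsto (fun e : ℝ => (u + e)⁻¹) (nhdsWithin 0 (Set.Ioi 0)) (nhds u⁻¹) :=
        (h0.inv₀ hu.ne').mono_left nhdsWithin_le_nhds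
      have h2 := h1.const_mul (Real.exp (-(r*u)) - Real.exp (-u))
      simpa [div_eq_mul_inv] using h2
  rw [frullani hr] at hlim
  have H := hlim.const_mul ((2*π)⁻¹)
  have heq : (fun e => (2*π)⁻¹ * ∫ u in Set.Ioi (0:ℝ),
      (Real.exp (-(r*u)) - Real.exp (-u)) * (u + e)⁻¹)
      =ᶠ[nhdsWithin 0 (Set.Ioi 0)] (fun e => uEps (r*e) - uEps e) := by
    filter_upwards [self_mem_nhdsWithin] with e he
    exact (hkey e he).symm
  have H2 := H.congr' heq
  rw [one_div, Real.log_inv]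
  exact H2

lemma nsq_smul (c : ℝ) (x : ℝ × ℝ) : nsq (c • x) = c^2 * nsq x := by
  simp [nsq, Prod.smul_fst, Prod.smul_snd, smul_eq_mul]; ring

lemma pker_scale {r : ℝ} (hr : 0 < r) (e : ℝ) (x : ℝ × ℝ) :
    pker e ((Real.sqrt r)⁻¹ • x) = r * pker (r * e) x := by
  rcases eq_or_ne e 0 with rfl | he
  · simp [pker]
  · rw [pker, pker, nsq_smul, inv_pow, Real.sq_sqrt hr.le]
    have h1 : (2 * π * e)⁻¹ = r * (2 * π * (r * e))⁻¹ := by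
      field_simp
    have h2 : -(r⁻¹ * nsq x) / (2 * e) = -nsq x / (2 * (r * e)) := by
      rw [div_eq_div_iff (mul_ne_zero two_ne_zero he)
        (mul_ne_zero two_ne_zero (mul_ne_zero hr.ne' he))]
      field_simp
    rw [h1, h2]; ring

lemma smul_simplexSet {r : ℝ} (hr : 0 < r) (k : ℕ) (t : ℝ) :
    r • simplexSet k t = simplexSet k (r * t) := by
  have hcancel : ∀ x : ℝ, r * (r⁻¹ * x) = x := fun x => by field_simp
  ext u
  rw [Set.mem_smul_set_iff_inv_smul_mem₀ hr.ne']
  constructor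
  · rintro ⟨hmono, hb⟩
    refine ⟨fun i j hij => ?_, fun i => ?_⟩
    · have h := mul_le_mul_of_nonneg_left (hmono hij) hr.le
      simpa only [Pi.smul_apply, smul_eq_mul, hcancel] using h
    · have h1 := (hb i).1
      have h2 := (hb i).2
      simp only [Pi.smul_apply, smul_eq_mul] at h1 h2
      constructor
      · have h3 := mul_le_mul_of_nonneg_left h1 hr.le
        rwa [hcancel, mul_zero] at h3
      · have h3 := mul_lt_mul_of_pos_left h2 hr
        rwa [hcancel] at h3
  · rintro ⟨hmono, hb⟩
    have hr' : (0:ℝ) < r⁻¹ := by positivity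
    refine ⟨fun i j hij => ?_, fun i => ?_⟩
    · have h := mul_le_mul_of_nonneg_left (hmono hij) hr'.le
      simpa only [Pi.smul_apply, smul_eq_mul] using h
    · simp only [Pi.smul_apply, smul_eq_mul]
      refine ⟨mul_nonneg hr'.le (hb i).1, ?_⟩
      have h3 := mul_lt_mul_of_pos_left (hb i).2 hr'
      rwa [inv_mul_cancel_left₀ hr.ne'] at h3

lemma alphaR_scale (W : ℝ → Ω → ℝ × ℝ) {r : ℝ} (hr : 0 < r) {k : ℕ} (hk : 1 ≤ k)
    (e t : ℝ) (ω : Ω) :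
    alphaR W r k e t ω = r⁻¹ * alphaR W 1 k (r * e) (r * t) ω := by
  rw [alphaR, alphaR]
  simp only [Real.sqrt_one, inv_one, one_smul, one_mul]
  set f : (Fin k → ℝ) → ℝ := fun u => ∏ j ∈ Finset.range k,
    if h : j < k ∧ j ≠ 0 then
      pker (r * e) (W (u ⟨j, h.1⟩) ω - W (u ⟨j - 1, by omega⟩) ω)
    else 1 with hf
  have step1 : ∀ s : Fin k → ℝ,
      (∏ j ∈ Finset.range k,
        if h : j < k ∧ j ≠ 0 then
          pker e ((Real.sqrt r)⁻¹ •
            (W (r * s ⟨j, h.1⟩) ω - W (r * s ⟨j - 1, by omega⟩) ω))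
        else 1) = r ^ (k - 1) * f (r • s) := by
    intro s
    have hsplit : ∀ j ∈ Finset.range k,
        (if h : j < k ∧ j ≠ 0 then
          pker e ((Real.sqrt r)⁻¹ •
            (W (r * s ⟨j, h.1⟩) ω - W (r * s ⟨j - 1, by omega⟩) ω))
        else 1)
        = (if j < k ∧ j ≠ 0 then r else 1) *
          (if h : j < k ∧ j ≠ 0 then
            pker (r * e) (W ((r • s) ⟨j, h.1⟩) ω - W ((r • s) ⟨j - 1, by omega⟩) ω)
          else 1) := by
      intro j _
      by_cases hj : j < k ∧ j ≠ 0
      · simp only [dif_pos hj, if_pos hj]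
        rw [pker_scale hr]
        simp only [Pi.smul_apply, smul_eq_mul]
      · simp only [dif_neg hj, if_neg hj, one_mul]
    rw [Finset.prod_congr rfl hsplit, Finset.prod_mul_distrib]
    congr 1
    have hset : ((Finset.range k).filter fun j => j < k ∧ j ≠ 0) = Finset.Ioo 0 k := by
      ext j
      simp only [Finset.mem_filter, Finset.mem_range, Finset.mem_Ioo]
      omega
    rw [Finset.prod_ite, Finset.prod_const, Finset.prod_const, one_pow, mul_one, hset,
      Nat.card_Ioo]
    norm_num
  calc ∫ s in simplexSet k t, ∏ j ∈ Finset.range k,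
        (if h : j < k ∧ j ≠ 0 then
          pker e ((Real.sqrt r)⁻¹ •
            (W (r * s ⟨j, h.1⟩) ω - W (r * s ⟨j - 1, by omega⟩) ω))
        else 1)
      = ∫ s in simplexSet k t, r ^ (k - 1) * f (r • s) := by
        exact integral_congr_ae (Filter.Eventually.of_forall fun s => step1 s)
    _ = r ^ (k - 1) * ∫ s in simplexSet k t, f (r • s) := MeasureTheory.integral_const_mul _ _
    _ = r ^ (k - 1) * ((r ^ Module.finrank ℝ (Fin k → ℝ))⁻¹ •
          ∫ u in r • simplexSet k t, f u) := by
        rw [Measure.setIntegral_comp_smul_of_pos volume f (simplexSet k t) hr]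
    _ = r⁻¹ * ∫ u in simplexSet k (r * t), f u := by
        rw [smul_simplexSet hr, Module.finrank_fin_fun, smul_eq_mul, ← mul_assoc]
        congr 1
        have : r ^ k = r ^ (k - 1) * r := by
          conv_lhs => rw [show k = (k - 1) + 1 by omega]
          rw [pow_succ]
        rw [this, mul_inv, ← mul_assoc, mul_inv_cancel₀ (by positivity), one_mul]

lemma binom_expand (n : ℕ) (b c : ℝ) (f : ℕ → ℝ) :
    ∑ i ∈ Finset.range (n+1), (n.choose i : ℝ) * (b+c)^(n-i) * f i
    = ∑ j ∈ Finset.range (n+1), (n.choose j : ℝ) * c^(n-j) *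
        ∑ i ∈ Finset.range (j+1), (j.choose i : ℝ) * b^(j-i) * f i := by
  have step1 : ∀ j ∈ Finset.range (n+1),
      (n.choose j : ℝ) * c^(n-j) * ∑ i ∈ Finset.range (j+1), (j.choose i : ℝ) * b^(j-i) * f i
      = ∑ i ∈ Finset.range (n+1), (if i ≤ j then
          (n.choose j : ℝ) * (j.choose i : ℝ) * c^(n-j) * b^(j-i) * f i else 0) := by
    intro j hj
    rw [Finset.mul_sum, ← Finset.sum_filter]
    have hfil : (Finset.range (n+1)).filter (fun i => i ≤ j) = Finset.range (j+1) := by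
      ext i
      simp only [Finset.mem_filter, Finset.mem_range]
      simp only [Finset.mem_range] at hj
      omega
    rw [hfil]
    refine Finset.sum_congr rfl fun i _ => by ring
  rw [Finset.sum_congr rfl step1, Finset.sum_comm]
  refine Finset.sum_congr rfl fun i hi => ?_
  simp only [Finset.mem_range] at hi
  have hi' : i ≤ n := by omega
  rw [← Finset.sum_filter]
  have hfil2 : (Finset.range (n+1)).filter (fun j => i ≤ j) = Finset.Ico i (n+1) := by
    ext j
    simp only [Finset.mem_filter, Finset.mem_range, Finset.mem_Ico]
    omega
  rw [hfil2, Finset.sum_Ico_eq_sum_range]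
  have hn : n + 1 - i = (n - i) + 1 := by omega
  rw [hn]
  have hterm : ∀ d ∈ Finset.range ((n-i)+1),
      (n.choose (i+d) : ℝ) * ((i+d).choose i : ℝ) * c^(n-(i+d)) * b^((i+d)-i) * f i
      = (n.choose i : ℝ) * (b^d * c^((n-i)-d) * ((n-i).choose d : ℝ)) * f i := by
    intro d hd
    simp only [Finset.mem_range] at hd
    have h1 : i + d ≤ n := by omega
    have hc := Nat.choose_mul (n := n) (Nat.le_add_right i d)
    have h2 : i + d - i = d := by omega
    rw [h2] at hc
    have h3 : n - (i + d) = (n - i) - d := by omega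
    have hcast : (n.choose (i+d) : ℝ) * ((i+d).choose i : ℝ)
        = (n.choose i : ℝ) * ((n-i).choose d : ℝ) := by exact_mod_cast congrArg Nat.cast hc
    rw [h2, h3, hcast]
    ring
  rw [Finset.sum_congr rfl hterm, ← Finset.sum_mul, ← Finset.mul_sum, ← add_pow]

lemma gammaApprox_scale (W : ℝ → Ω → ℝ × ℝ) (h : ℝ → ℝ) {r : ℝ} (hr : 0 < r) {k : ℕ}
    (hk : 1 ≤ k) (e t : ℝ) (ω : Ω) :
    gammaApprox W h r k e t ω
    = r⁻¹ * ∑ m ∈ Finset.Icc 1 k, (Nat.choose (k-1) (m-1) : ℝ) *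
        (h (r*e) - h e)^(k-m) * gammaApprox W h 1 m (r*e) (r*t) ω := by
  obtain ⟨n, rfl⟩ : ∃ n, k = n + 1 := ⟨k - 1, by omega⟩
  set b := -h (r*e) with hb
  set c := h (r*e) - h e with hc
  have hbc : -h e = b + c := by rw [hb, hc]; ring
  set α : ℕ → ℝ := fun i => alphaR W 1 (1+i) (r*e) (r*t) ω with hα
  have L : gammaApprox W h r (n+1) e t ω
      = r⁻¹ * ∑ i ∈ Finset.range (n+1), (Nat.choose n i : ℝ) * (b+c)^(n-i) * α i := by
    rw [gammaApprox, ← Finset.Ico_add_one_right_eq_Icc, Finset.sum_Ico_eq_sum_range, Finset.mul_sum]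
    refine Finset.sum_congr (by norm_num) fun i hi => ?_
    rw [alphaR_scale W hr (show 1 ≤ 1+i by omega) e t ω, hbc]
    have h1 : n + 1 - 1 = n := by omega
    have h2 : 1 + i - 1 = i := by omega
    have h3 : n + 1 - (1 + i) = n - i := by omega
    rw [h1, h2, h3, hα]
    ring
  have R : ∀ j : ℕ, gammaApprox W h 1 (1+j) (r*e) (r*t) ω
      = ∑ i ∈ Finset.range (j+1), (Nat.choose j i : ℝ) * b^(j-i) * α i := by
    intro j
    rw [gammaApprox, ← Finset.Ico_add_one_right_eq_Icc, Finset.sum_Ico_eq_sum_range]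
    refine Finset.sum_congr (by rw [show 1 + j + 1 - 1 = j + 1 by omega]) fun i hi => ?_
    have h1 : 1 + j - 1 = j := by omega
    have h2 : 1 + i - 1 = i := by omega
    have h3 : 1 + j - (1 + i) = j - i := by omega
    rw [h1, h2, h3, hb, hα]
  rw [L, binom_expand n b c α]
  congr 1
  rw [← Finset.Ico_add_one_right_eq_Icc, Finset.sum_Ico_eq_sum_range]
  refine Finset.sum_congr (by norm_num) fun j hj => ?_
  have h1 : n + 1 - 1 = n := by omega
  have h2 : 1 + j - 1 = j := by omega
  have h3 : n + 1 - (1 + j) = n - j := by omega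
  rw [h1, h2, h3, R j, hc]

end RescalingAux


lemma tendsto_mul_left_nhdsWithin {r : ℝ} (hr : 0 < r) :
    Filter.Tendsto (fun e : ℝ => r * e) (nhdsWithin 0 (Set.Ioi 0)) (nhdsWithin 0 (Set.Ioi 0)) := by
  refine tendsto_nhdsWithin_of_tendsto_nhds_of_eventually_within _ ?_ ?_
  · have h0 : Filter.Tendsto (fun e : ℝ => r * e) (nhds 0) (nhds (r * 0)) :=
      (continuous_const.mul continuous_id).tendsto 0
    rw [mul_zero] at h0
    exact h0.mono_left nhdsWithin_le_nhds
  · filter_upwards [self_mem_nhdsWithin] with e he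
    exact mul_pos hr he

lemma hscale_tendsto (h : ℝ → ℝ)
    (hH : ∃ L : ℝ, Filter.Tendsto (fun e => h e - uEps e) (nhdsWithin 0 (Set.Ioi 0)) (nhds L))
    {r : ℝ} (hr : 0 < r) :
    Filter.Tendsto (fun e => h (r * e) - h e) (nhdsWithin 0 (Set.Ioi 0))
      (nhds ((2 * π)⁻¹ * Real.log (1 / r))) := by
  obtain ⟨L0, hL0⟩ := hH
  have t1 : Filter.Tendsto (fun e => h (r * e) - uEps (r * e)) (nhdsWithin 0 (Set.Ioi 0))
      (nhds L0) := hL0.comp (tendsto_mul_left_nhdsWithin hr)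
  have t3 := uEps_diff hr
  have tcomb := (t1.sub hL0).add t3
  rw [sub_self, zero_add] at tcomb
  refine tcomb.congr fun e => ?_
  ring

lemma main_tendsto (W : ℝ → Ω → ℝ × ℝ) (h : ℝ → ℝ)
    (hH : ∃ L : ℝ, Filter.Tendsto (fun e => h e - uEps e) (nhdsWithin 0 (Set.Ioi 0)) (nhds L))
    {r : ℝ} (hr : 0 < r) (t : ℝ) {k : ℕ} (hk : 1 ≤ k) (ω : Ω) (M : ℕ → ℝ)
    (hM : ∀ m : ℕ, 1 ≤ m → m ≤ k →
      Filter.Tendsto (fun e => gammaApprox W h 1 m e (r * t) ω) (nhdsWithin 0 (Set.Ioi 0))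
        (nhds (M m))) :
    Filter.Tendsto (fun e => gammaApprox W h r k e t ω) (nhdsWithin 0 (Set.Ioi 0))
      (nhds (r⁻¹ * ∑ m ∈ Finset.Icc 1 k,
        (Nat.choose (k - 1) (m - 1) : ℝ) * ((2 * π)⁻¹ * Real.log (1 / r)) ^ (k - m) * M m)) := by
  have hc := hscale_tendsto h hH hr
  have hsum : Filter.Tendsto (fun e => ∑ m ∈ Finset.Icc 1 k,
      (Nat.choose (k - 1) (m - 1) : ℝ) * (h (r*e) - h e) ^ (k - m) *
        gammaApprox W h 1 m (r*e) (r*t) ω) (nhdsWithin 0 (Set.Ioi 0))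
      (nhds (∑ m ∈ Finset.Icc 1 k,
        (Nat.choose (k - 1) (m - 1) : ℝ) * ((2 * π)⁻¹ * Real.log (1 / r)) ^ (k - m) * M m)) := by
    refine tendsto_finset_sum _ fun m hm => ?_
    simp only [Finset.mem_Icc] at hm
    have h1 : Filter.Tendsto (fun e => (h (r*e) - h e) ^ (k - m)) (nhdsWithin 0 (Set.Ioi 0))
        (nhds (((2 * π)⁻¹ * Real.log (1 / r)) ^ (k - m))) := hc.pow (k - m)
    have h2 : Filter.Tendsto (fun e => gammaApprox W h 1 m (r*e) (r*t) ω)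
        (nhdsWithin 0 (Set.Ioi 0)) (nhds (M m)) :=
      (hM m hm.1 hm.2).comp (tendsto_mul_left_nhdsWithin hr)
    exact (h1.const_mul _).mul h2
  have := hsum.const_mul r⁻¹
  refine this.congr fun e => ?_
  exact (gammaApprox_scale W h hr hk e t ω).symm

/-- **Lemma 6.2** (Rescaling Lemma). Let `h ∈ H` and `ω_r(s) = r^{-1/2} ω(rs)`. Then for
every `k ≥ 1`,
`ĥγ_k(t,h,ω_r) = r^{-1} Σ_{m=1}^k C(k-1,m-1) ((1/2π) log(1/r))^{k-m} ĥγ_m(rt,h,ω)`. -/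
theorem rescaling_lemma {Ω : Type*} [MeasurableSpace Ω] (P : Measure Ω)
    [IsProbabilityMeasure P] (W : ℝ → Ω → ℝ × ℝ) (hW : IsPlanarBM P W)
    (h : ℝ → ℝ)
    (hH : ∃ L : ℝ, Tendsto (fun e => h e - uEps e) (nhdsWithin 0 (Set.Ioi 0)) (nhds L))
    (r : ℝ) (hr : 0 < r) (t : ℝ) (ht : 0 ≤ t) (k : ℕ) (hk : 1 ≤ k) :
    ∀ᵐ ω ∂P,
      ((∀ m : ℕ, 1 ≤ m → m ≤ k → ∃ M : ℝ,
          Tendsto (fun e => gammaApprox W h 1 m e (r * t) ω) (nhdsWithin 0 (Set.Ioi 0))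
            (nhds M)) →
        ∃ L : ℝ,
          Tendsto (fun e => gammaApprox W h r k e t ω) (nhdsWithin 0 (Set.Ioi 0)) (nhds L)) ∧
      ∀ (L : ℝ) (M : ℕ → ℝ),
        Tendsto (fun e => gammaApprox W h r k e t ω) (nhdsWithin 0 (Set.Ioi 0)) (nhds L) →
        (∀ m : ℕ, 1 ≤ m → m ≤ k →
          Tendsto (fun e => gammaApprox W h 1 m e (r * t) ω) (nhdsWithin 0 (Set.Ioi 0))
            (nhds (M m))) →
        L = r⁻¹ * ∑ m ∈ Finset.Icc 1 k,
          (Nat.choose (k - 1) (m - 1) : ℝ) * ((2 * π)⁻¹ * Real.log (1 / r)) ^ (k - m) *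
            M m := by
  refine Filter.Eventually.of_forall fun ω => ⟨?_, ?_⟩
  · intro hm
    choose! M hM using hm
    exact ⟨_, main_tendsto W h hH hr t hk ω M hM⟩
  · intro L M hL hM
    exact tendsto_nhds_unique hL (main_tendsto W h hH hr t hk ω M hM)

end PlanarRange
end
end
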